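/- Let G be a simple graph and let G' be obtained from G by performing a finite sequence of k double subdivisions (each replacing some edge by a path of length 3, adding 2 new vertices). Then the independence number of G' equals the independence number of G plus k; equivalently, G has an independent set of size s if and only if G' has an independent set of size s + (|V(G')| − |V(G)|)/2. -/

import Mathlib

/-!
A double subdivision of `uv` shifts the sizes of independent sets by exactly one. An independent
set `t` of `G` extends by the new vertex next to `u` if `u ∉ t`, and otherwise by the one next to
`v`. Conversely, an independent set of `G'` contains at most one of the two adjacent new vertices,
and its old part is independent in `G` unless it contains both `u` and `v`; in that case it contains
no new vertex, and dropping `u` loses just one element. Each step also adds two vertices, which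
turns `(|V(G')| - |V(G)|) / 2` into the number of steps.
-/

/-- The independence number of a graph, as the supremum of sizes of independent sets. -/
noncomputable def myIndepNum {V : Type} (G : SimpleGraph V) : ℕ :=
  sSup {n : ℕ | ∃ s : Finset V, s.card = n ∧
    ∀ a ∈ s, ∀ b ∈ s, a ≠ b → ¬ G.Adj a b}

/-- `IsDoubleSubdivision G u v G'` : `G'` (on `V ⊕ Fin 2`) is obtained from `G` by
replacing the edge `uv` by the path `u – inr 0 – inr 1 – v`. -/
def IsDoubleSubdivision {V : Type} (G : SimpleGraph V) (u v : V)
    (G' : SimpleGraph (V ⊕ Fin 2)) : Prop :=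
  G.Adj u v ∧
  ∀ x y : V ⊕ Fin 2, G'.Adj x y ↔
    ((∃ a b : V, x = Sum.inl a ∧ y = Sum.inl b ∧ G.Adj a b ∧
        ¬((a = u ∧ b = v) ∨ (a = v ∧ b = u))) ∨
     (x = Sum.inl u ∧ y = Sum.inr 0) ∨ (x = Sum.inr 0 ∧ y = Sum.inl u) ∨
     (x = Sum.inr 0 ∧ y = Sum.inr 1) ∨ (x = Sum.inr 1 ∧ y = Sum.inr 0) ∨
     (x = Sum.inr 1 ∧ y = Sum.inl v) ∨ (x = Sum.inl v ∧ y = Sum.inr 1))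

/-- `EvenSubdivisionSeq G G' k` : `G'` is obtained from `G` by a sequence of `k`
double subdivisions. -/
inductive EvenSubdivisionSeq : {V : Type} → SimpleGraph V → {W : Type} → SimpleGraph W →
    ℕ → Prop
  | refl {V : Type} (G : SimpleGraph V) : EvenSubdivisionSeq G G 0
  | step {V W : Type} {G : SimpleGraph V} {H : SimpleGraph W} {k : ℕ} (u v : W)
      (H' : SimpleGraph (W ⊕ Fin 2)) :
      EvenSubdivisionSeq G H k → IsDoubleSubdivision H u v H' →
      EvenSubdivisionSeq G H' (k + 1)

open SimpleGraph Finset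

theorem SimpleGraph.exists_isNIndepSet_iff {V : Type*} (G : SimpleGraph V) (n : ℕ) :
    (∃ t, G.IsNIndepSet n t) ↔
      ∃ t : Finset V, #t = n ∧ ∀ a ∈ t, ∀ b ∈ t, a ≠ b → ¬ G.Adj a b := by
  simp only [isNIndepSet_iff, and_comm]
  rfl

theorem myIndepNum_eq_indepNum {V : Type} (G : SimpleGraph V) : myIndepNum G = G.indepNum := by
  simp only [myIndepNum, indepNum, exists_isNIndepSet_iff]

theorem SimpleGraph.IsIndepSet.exists_isNIndepSet_of_le {α : Type*} {G : SimpleGraph α}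
    {t : Finset α} (ht : G.IsIndepSet t) {n : ℕ} (hn : n ≤ #t) : ∃ s, G.IsNIndepSet n s := by
  obtain ⟨s, hst, hs⟩ := exists_subset_card_eq hn
  exact ⟨s, ht.mono (coe_subset.2 hst), hs⟩

theorem SimpleGraph.indepNum_eq_add_of_exists_isNIndepSet_iff {V W : Type*} [Finite V] [Finite W]
    {G : SimpleGraph V} {G' : SimpleGraph W} {k : ℕ}
    (h : ∀ n, (∃ t, G.IsNIndepSet n t) ↔ ∃ t, G'.IsNIndepSet (n + k) t) :
    G'.indepNum = G.indepNum + k := by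
  obtain ⟨t', ht'⟩ := (h _).1 G.exists_isNIndepSet_indepNum
  have hle : G.indepNum + k ≤ G'.indepNum := ht'.card_eq ▸ ht'.isIndepSet.card_le_indepNum
  obtain ⟨t, ht⟩ := (h (G'.indepNum - k)).2 <| by
    rw [Nat.sub_add_cancel (by omega)]
    exact G'.exists_isNIndepSet_indepNum
  have := ht.card_eq ▸ ht.isIndepSet.card_le_indepNum
  omega

namespace IsDoubleSubdivision

variable {V : Type} {G : SimpleGraph V} {u v : V} {G' : SimpleGraph (V ⊕ Fin 2)}

theorem adj_inl_inl_iff (h : IsDoubleSubdivision G u v G') {a b : V} :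
    G'.Adj (.inl a) (.inl b) ↔ G.Adj a b ∧ s(a, b) ≠ s(u, v) := by
  simp [h.2]

theorem adj_inr_inl_iff (h : IsDoubleSubdivision G u v G') {i : Fin 2} {a : V} :
    G'.Adj (.inr i) (.inl a) ↔ i = 0 ∧ a = u ∨ i = 1 ∧ a = v := by
  simp [h.2, eq_comm]

theorem adj_inr_zero_inr_one (h : IsDoubleSubdivision G u v G') :
    G'.Adj (.inr 0) (.inr 1) := by
  simp [h.2]

theorem isIndepSet_disjSum_singleton (h : IsDoubleSubdivision G u v G') {t : Finset V}
    (ht : G.IsIndepSet t) {i : Fin 2} (hi : ∀ a ∈ t, ¬ G'.Adj (.inr i) (.inl a)) :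
    G'.IsIndepSet (t.disjSum {i} : Finset (V ⊕ Fin 2)) := by
  rintro (a | j) ha (b | l) hb hne hadj <;>
    simp only [mem_coe, inl_mem_disjSum, inr_mem_disjSum, mem_singleton] at ha hb
  · exact ht ha hb (by simpa using hne) (h.adj_inl_inl_iff.1 hadj).1
  · exact hi a ha (hb ▸ hadj.symm)
  · exact hi b hb (ha ▸ hadj)
  · exact hne (by rw [ha, hb])

theorem exists_isNIndepSet_succ (h : IsDoubleSubdivision G u v G') {n : ℕ} {t : Finset V}
    (ht : G.IsNIndepSet n t) : ∃ t', G'.IsNIndepSet (n + 1) t' := by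
  obtain ⟨i, hi⟩ : ∃ i : Fin 2, ∀ a ∈ t, ¬ G'.Adj (.inr i) (.inl a) := by
    by_cases hu : u ∈ t
    · have hv : v ∉ t := fun hv => ht.isIndepSet hu hv h.1.ne h.1
      exact ⟨1, fun a ha hadj => hv (by simp_all [h.adj_inr_inl_iff])⟩
    · exact ⟨0, fun a ha hadj => hu (by simp_all [h.adj_inr_inl_iff])⟩
  exact ⟨t.disjSum {i}, h.isIndepSet_disjSum_singleton ht.isIndepSet hi, by simp [ht.card_eq]⟩

theorem card_toRight_le_one (h : IsDoubleSubdivision G u v G') {t' : Finset (V ⊕ Fin 2)}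
    (ht' : G'.IsIndepSet t') : #t'.toRight ≤ 1 := by
  refine card_le_one.2 fun i hi j hj => by_contra fun hij => ?_
  rw [mem_toRight] at hi hj
  obtain ⟨rfl, rfl⟩ | ⟨rfl, rfl⟩ : i = 0 ∧ j = 1 ∨ i = 1 ∧ j = 0 := by omega
  · exact ht' hi hj (by simp) h.adj_inr_zero_inr_one
  · exact ht' hi hj (by simp) h.adj_inr_zero_inr_one.symm

theorem isIndepSet_of_subset_toLeft (h : IsDoubleSubdivision G u v G')
    {t' : Finset (V ⊕ Fin 2)} (ht' : G'.IsIndepSet t') {t : Finset V} (ht : t ⊆ t'.toLeft)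
    (huv : u ∉ t ∨ v ∉ t) : G.IsIndepSet t := by
  intro a ha b hb hne hadj
  refine ht' (mem_toLeft.1 (ht ha)) (mem_toLeft.1 (ht hb)) (by simpa using hne)
    (h.adj_inl_inl_iff.2 ⟨hadj, fun he => ?_⟩)
  rcases Sym2.eq_iff.1 he with ⟨rfl, rfl⟩ | ⟨rfl, rfl⟩ <;> simp_all

theorem exists_isIndepSet_card_le_succ (h : IsDoubleSubdivision G u v G')
    {t' : Finset (V ⊕ Fin 2)} (ht' : G'.IsIndepSet t') :
    ∃ t : Finset V, G.IsIndepSet t ∧ #t' ≤ #t + 1 := by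
  classical
  rw [← card_toLeft_add_card_toRight]
  by_cases huv : u ∈ t'.toLeft ∧ v ∈ t'.toLeft
  · have hR : t'.toRight = ∅ := by
      refine eq_empty_of_forall_notMem fun i hi => ?_
      rw [mem_toRight] at hi
      rw [mem_toLeft, mem_toLeft] at huv
      fin_cases i
      · exact ht' hi huv.1 (by simp) (h.adj_inr_inl_iff.2 (.inl ⟨rfl, rfl⟩))
      · exact ht' hi huv.2 (by simp) (h.adj_inr_inl_iff.2 (.inr ⟨rfl, rfl⟩))
    refine ⟨t'.toLeft.erase u,
      h.isIndepSet_of_subset_toLeft ht' (erase_subset _ _) (.inl (notMem_erase _ _)), ?_⟩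
    rw [hR, card_empty, card_erase_add_one huv.1, add_zero]
  · exact ⟨t'.toLeft, h.isIndepSet_of_subset_toLeft ht' subset_rfl (not_and_or.1 huv),
      by grw [h.card_toRight_le_one ht']⟩

theorem exists_isNIndepSet_succ_iff (h : IsDoubleSubdivision G u v G') {n : ℕ} :
    (∃ t, G.IsNIndepSet n t) ↔ ∃ t', G'.IsNIndepSet (n + 1) t' := by
  refine ⟨fun ⟨t, ht⟩ => h.exists_isNIndepSet_succ ht, fun ⟨t', ht'⟩ => ?_⟩
  obtain ⟨t, ht, hcard⟩ := h.exists_isIndepSet_card_le_succ ht'.isIndepSet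
  exact ht.exists_isNIndepSet_of_le (by rw [ht'.card_eq] at hcard; omega)

end IsDoubleSubdivision

namespace EvenSubdivisionSeq

variable {V W : Type} {G : SimpleGraph V} {G' : SimpleGraph W} {k : ℕ}

theorem exists_isNIndepSet_iff (h : EvenSubdivisionSeq G G' k) (n : ℕ) :
    (∃ t, G.IsNIndepSet n t) ↔ ∃ t, G'.IsNIndepSet (n + k) t := by
  induction h with
  | refl => rfl
  | step _ _ _ _ hH' ih => rw [ih, hH'.exists_isNIndepSet_succ_iff, add_assoc]

theorem card_eq (h : EvenSubdivisionSeq G G' k) :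
    Finite W → Nat.card W = Nat.card V + 2 * k := by
  induction h with
  | refl => intro _; rfl
  | @step W' _ _ _ _ _ _ _ _ ih =>
    intro hW
    have := Finite.sum_left (α := W') (Fin 2)
    rw [Nat.card_sum, ih this, Nat.card_fin]
    ring

end EvenSubdivisionSeq

/-- If `G'` is obtained from a finite simple graph `G` by `k` double
subdivisions, then `α(G') = α(G) + k`; equivalently, `G` has an independent set of size `s`
iff `G'` has one of size `s + (|V(G')| − |V(G)|)/2`. -/
theorem even_subdivision_indepNum {V W : Type} [Fintype V] [Fintype W]
    (G : SimpleGraph V) (G' : SimpleGraph W) (k : ℕ)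
    (h : EvenSubdivisionSeq G G' k) :
    myIndepNum G' = myIndepNum G + k ∧
    ∀ s : ℕ,
      (∃ t : Finset V, t.card = s ∧ ∀ a ∈ t, ∀ b ∈ t, a ≠ b → ¬ G.Adj a b) ↔
      (∃ t : Finset W, t.card = s + (Fintype.card W - Fintype.card V) / 2 ∧
        ∀ a ∈ t, ∀ b ∈ t, a ≠ b → ¬ G'.Adj a b) := by
  have hcard := h.card_eq inferInstance
  rw [Nat.card_eq_fintype_card, Nat.card_eq_fintype_card] at hcard
  have hk : (Fintype.card W - Fintype.card V) / 2 = k := by omega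
  rw [myIndepNum_eq_indepNum, myIndepNum_eq_indepNum, hk]
  refine ⟨indepNum_eq_add_of_exists_isNIndepSet_iff h.exists_isNIndepSet_iff, fun s => ?_⟩
  simpa only [exists_isNIndepSet_iff] using h.exists_isNIndepSet_iff s
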